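/- arXiv:1904.06638 — 4 statements merged into one kernel-verified Lean document; each statement's English description precedes it below -/
import Mathlib

section
/- For elements α and β of the semigroup 𝐈ℕ∞, α 𝓓 β (α and β are Green's 𝓓-equivalent) if and only if dom α is a shift of dom β, i.e. there exists an integer k such that dom α = { n + k : n ∈ dom β } (equivalently, ran α is a shift of ran β). -/
/-- Partial transformations of the set ℕ of positive integers. -/
abbrev PMapN : Type := ℕ+ → Option ℕ+

/-- The domain of a partial transformation. -/
def pdom (f : PMapN) : Set ℕ+ := {n | f n ≠ none}

/-- The range of a partial transformation. -/
def pran (f : PMapN) : Set ℕ+ := {m | ∃ n, f n = some m}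

/-- Composition of partial transformations: `pmul f g` applies `g` first and then `f`. -/
def pmul (f g : PMapN) : PMapN := fun n => (g n).bind f

/-- The identity transformation 𝕀 of ℕ. -/
def pid : PMapN := fun n => some n

/-- `f` is a partial bijection (an injective partial map). -/
def IsPartialBij (f : PMapN) : Prop :=
  ∀ ⦃m n a⦄, f m = some a → f n = some a → m = n

/-- `f` is a partial isometry with respect to the metric `d(m, n) = |m - n|`. -/
def IsIsometry (f : PMapN) : Prop :=
  ∀ ⦃m n a b⦄, f m = some a → f n = some b →
    |((a : ℕ) : ℤ) - ((b : ℕ) : ℤ)| = |((m : ℕ) : ℤ) - ((n : ℕ) : ℤ)|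

/-- Membership in the inverse monoid `𝐈ℕ∞` of partial cofinite isometries of ℕ:
a partial bijection of ℕ with cofinite domain and cofinite range preserving distances. -/
def InIN (f : PMapN) : Prop :=
  IsPartialBij f ∧ (pdom f)ᶜ.Finite ∧ (pran f)ᶜ.Finite ∧ IsIsometry f

/-- Green's relation 𝓛 on the monoid `𝐈ℕ∞`. -/
def GreenL (a b : PMapN) : Prop :=
  (∃ u, InIN u ∧ pmul u a = b) ∧ (∃ v, InIN v ∧ pmul v b = a)

/-- Green's relation 𝓡 on the monoid `𝐈ℕ∞`. -/
def GreenR (a b : PMapN) : Prop :=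
  (∃ u, InIN u ∧ pmul a u = b) ∧ (∃ v, InIN v ∧ pmul b v = a)

/-- Green's relation 𝓓 is the relational composition `𝓛 ∘ 𝓡`. -/
def GreenD (a b : PMapN) : Prop := ∃ c, InIN c ∧ GreenL a c ∧ GreenR c b

/-- `A` is a shift of `B`: there is an integer `k` with `A = { n + k : n ∈ B }`
(as sets of integers). -/
def ShiftOf (A B : Set ℕ+) : Prop :=
  ∃ k : ℤ, ∀ x : ℤ,
    (∃ n ∈ A, x = ((n : ℕ) : ℤ)) ↔ (∃ m ∈ B, x = ((m : ℕ) : ℤ) + k)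

/-! Every element of `𝐈ℕ∞` is a translation `n ↦ n + k` restricted to its domain: an isometry of
ℕ with unbounded domain cannot reverse orientation. Two such translations with the same domain
(range) differ by a translation applied on the left (right), so `𝓛`-classes are given by domains
and `𝓡`-classes by ranges. Hence `α 𝓓 β` iff some translation maps `dom α` onto `ran β`, i.e. iff
`dom α` is a shift of `ran β`; and `ran β` is itself a shift of `dom β`. -/

open Set

section Shift

variable {A B C : Set ℕ+}

/-- `ShiftOf A B` unfolds to `∃ k, IsShiftBy A B k`. -/
def IsShiftBy (A B : Set ℕ+) (k : ℤ) : Prop :=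
  ∀ x : ℤ, (∃ n ∈ A, x = (n : ℤ)) ↔ (∃ m ∈ B, x = (m : ℤ) + k)

lemma ShiftOf.symm (h : ShiftOf A B) : ShiftOf B A := by
  obtain ⟨k, hk⟩ := h
  refine ⟨-k, fun x => ⟨?_, ?_⟩⟩
  · rintro ⟨n, hn, rfl⟩
    obtain ⟨m, hm, hnm⟩ := (hk (n + k)).mpr ⟨n, hn, rfl⟩
    exact ⟨m, hm, by omega⟩
  · rintro ⟨m, hm, rfl⟩
    obtain ⟨n, hn, hmn⟩ := (hk m).mp ⟨m, hm, rfl⟩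
    exact ⟨n, hn, by omega⟩

lemma ShiftOf.trans (hAB : ShiftOf A B) (hBC : ShiftOf B C) : ShiftOf A C := by
  obtain ⟨k, hk⟩ := hAB
  obtain ⟨l, hl⟩ := hBC
  refine ⟨l + k, fun x => (hk x).trans ⟨?_, ?_⟩⟩
  · rintro ⟨m, hm, rfl⟩
    obtain ⟨n, hn, hmn⟩ := (hl m).mp ⟨m, hm, rfl⟩
    exact ⟨n, hn, by omega⟩
  · rintro ⟨n, hn, rfl⟩
    obtain ⟨m, hm, hmn⟩ := (hl (n + l)).mpr ⟨n, hn, rfl⟩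
    exact ⟨m, hm, by omega⟩

lemma ShiftOf.congr_left (h : ShiftOf A B) : ShiftOf A C ↔ ShiftOf B C :=
  ⟨h.symm.trans, h.trans⟩

lemma ShiftOf.congr_right (h : ShiftOf B C) : ShiftOf A B ↔ ShiftOf A C :=
  ⟨fun h' => h'.trans h, fun h' => h'.trans h.symm⟩

end Shift

section PartialMap

variable {f g : PMapN} {n a : ℕ+}

lemma mem_pdom_iff : n ∈ pdom f ↔ ∃ a, f n = some a := Option.ne_none_iff_exists'

lemma mem_pdom_of_eq_some (h : f n = some a) : n ∈ pdom f := mem_pdom_iff.mpr ⟨a, h⟩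

lemma mem_pran_of_eq_some (h : f n = some a) : a ∈ pran f := ⟨n, h⟩

lemma eq_none_of_not_mem_pdom (h : n ∉ pdom f) : f n = none := not_ne_iff.mp h

lemma pdom_pmul_subset (f g : PMapN) : pdom (pmul f g) ⊆ pdom g := by
  intro n hn hg
  exact hn (by simp [pmul, hg])

lemma pran_pmul_subset (f g : PMapN) : pran (pmul f g) ⊆ pran f := by
  rintro a ⟨n, hn⟩
  obtain ⟨m, -, hm⟩ := Option.bind_eq_some_iff.mp hn
  exact ⟨m, hm⟩

lemma GreenL.pdom_eq (h : GreenL f g) : pdom f = pdom g := by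
  obtain ⟨⟨u, -, rfl⟩, ⟨v, -, hv⟩⟩ := h
  exact (hv ▸ pdom_pmul_subset v (pmul u f)).antisymm (pdom_pmul_subset u f)

lemma GreenR.pran_eq (h : GreenR f g) : pran f = pran g := by
  obtain ⟨⟨u, -, rfl⟩, ⟨v, -, hv⟩⟩ := h
  exact (hv ▸ pran_pmul_subset (pmul f u) v).antisymm (pran_pmul_subset f u)

end PartialMap

section Translation

def IsTranslationBy (f : PMapN) (k : ℤ) : Prop :=
  ∀ ⦃n a : ℕ+⦄, f n = some a → (a : ℤ) = n + k

variable {f : PMapN} {k : ℤ}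

/-- An isometry with unbounded domain must preserve orientation: comparing an arbitrary pair
`n ↦ a` with a point `p ↦ b` far out in the domain, both `b - a = p - n` and `b - a₀ = p - n₀`
are forced, since the other signs would make `b` negative. -/
lemma IsIsometry.exists_isTranslationBy (hf : IsIsometry f) (hdom : (pdom f).Infinite) :
    ∃ k, IsTranslationBy f k := by
  obtain ⟨n₀, hn₀⟩ := hdom.nonempty
  obtain ⟨a₀, ha₀⟩ := mem_pdom_iff.mp hn₀
  refine ⟨a₀ - n₀, fun n a ha => ?_⟩
  obtain ⟨p, hp, hpn⟩ := hdom.exists_gt (n₀ + a₀ + n + a)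
  obtain ⟨b, hb⟩ := mem_pdom_iff.mp hp
  have hpn' : (n₀ + a₀ + n + a : ℤ) < p := by exact_mod_cast hpn
  have hb₀ := hf hb ha₀
  have hba := hf hb ha
  have := b.pos
  rcases abs_eq_abs.mp hb₀ with h₀ | h₀ <;> rcases abs_eq_abs.mp hba with h | h <;> omega

lemma InIN.exists_isTranslationBy (hf : InIN f) : ∃ k, IsTranslationBy f k := by
  refine hf.2.2.2.exists_isTranslationBy ?_
  simpa using hf.2.1.infinite_compl

lemma IsTranslationBy.isShiftBy (hf : IsTranslationBy f k) :
    IsShiftBy (pran f) (pdom f) k := by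
  refine fun x => ⟨?_, ?_⟩
  · rintro ⟨a, ⟨n, hn⟩, rfl⟩
    exact ⟨n, mem_pdom_of_eq_some hn, hf hn⟩
  · rintro ⟨n, hn, rfl⟩
    obtain ⟨a, ha⟩ := mem_pdom_iff.mp hn
    exact ⟨a, mem_pran_of_eq_some ha, (hf ha).symm⟩

lemma InIN.shiftOf_pran_pdom (hf : InIN f) : ShiftOf (pran f) (pdom f) :=
  let ⟨k, hk⟩ := hf.exists_isTranslationBy
  ⟨k, hk.isShiftBy⟩

end Translation

section TranslateOn

noncomputable def translateOn (A : Set ℕ+) (t : ℤ) : PMapN := fun n =>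
  open Classical in
  if n ∈ A ∧ 0 < (n : ℤ) + t then some ((n : ℤ) + t).toNat.toPNat' else none

variable {A B : Set ℕ+} {s t : ℤ} {n a : ℕ+}

lemma translateOn_eq_some : translateOn A t n = some a ↔ n ∈ A ∧ (a : ℤ) = n + t := by
  unfold translateOn
  split_ifs with h
  · rw [Option.some_inj, ← PNat.coe_inj, ← Int.natCast_inj, Nat.toPNat'_coe, if_pos (by omega),
      and_iff_right h.1]
    omega
  · simp only [false_iff, not_and]
    intro hn ha
    exact h ⟨hn, ha ▸ by exact_mod_cast a.pos⟩

lemma PNat.exists_coe_int_eq {x : ℤ} (hx : 0 < x) : ∃ n : ℕ+, (n : ℤ) = x :=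
  ⟨x.toNat.toPNat', by rw [Nat.toPNat'_coe, if_pos (by omega)]; omega⟩

lemma mem_pdom_translateOn : n ∈ pdom (translateOn A t) ↔ n ∈ A ∧ 0 < (n : ℤ) + t := by
  refine ⟨fun hn => ?_, fun ⟨hnA, hpos⟩ => ?_⟩
  · obtain ⟨a, ha⟩ := mem_pdom_iff.mp hn
    obtain ⟨hnA, han⟩ := translateOn_eq_some.mp ha
    exact ⟨hnA, han ▸ by positivity⟩
  · obtain ⟨a, ha⟩ := PNat.exists_coe_int_eq hpos
    exact mem_pdom_of_eq_some (translateOn_eq_some.mpr ⟨hnA, ha⟩)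

lemma mem_pran_translateOn : a ∈ pran (translateOn A t) ↔ ∃ n ∈ A, (a : ℤ) = n + t :=
  ⟨fun ⟨n, hn⟩ => ⟨n, translateOn_eq_some.mp hn⟩,
    fun ⟨n, hnA, ha⟩ => ⟨n, translateOn_eq_some.mpr ⟨hnA, ha⟩⟩⟩

lemma finite_setOf_coe_le (C : ℤ) : {n : ℕ+ | (n : ℤ) ≤ C}.Finite :=
  ((finite_Icc 0 C).preimage (by simp [InjOn])).subset fun n hn => ⟨by positivity, hn⟩

lemma translateOn_mem_IN (hA : Aᶜ.Finite) : InIN (translateOn A t) := by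
  refine ⟨fun m n a hm hn => ?_, ?_, ?_, fun m n a b hm hn => ?_⟩
  · have := (translateOn_eq_some.mp hm).2
    have := (translateOn_eq_some.mp hn).2
    exact_mod_cast (by omega : (m : ℤ) = n)
  · refine (hA.union (finite_setOf_coe_le (-t))).subset fun n hn => ?_
    rw [mem_compl_iff, mem_pdom_translateOn, not_and_or] at hn
    rcases hn with hn | hn
    · exact Or.inl hn
    · exact Or.inr (by simp only [mem_ofPred_eq]; omega)
  · have hAint : ((fun n : ℕ+ => (n : ℤ)) '' Aᶜ).Finite := hA.image _
    refine ((finite_setOf_coe_le t).union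
      (hAint.preimage (f := fun a : ℕ+ => (a : ℤ) - t) (by simp [InjOn]))).subset fun a ha => ?_
    by_cases hat : (a : ℤ) ≤ t
    · exact Or.inl hat
    obtain ⟨n, hn⟩ := PNat.exists_coe_int_eq (by omega : 0 < (a : ℤ) - t)
    refine Or.inr ⟨n, fun hnA => ha (mem_pran_translateOn.mpr ⟨n, hnA, by omega⟩), hn⟩
  · rw [(translateOn_eq_some.mp hm).2, (translateOn_eq_some.mp hn).2, add_sub_add_right_eq_sub]

lemma IsShiftBy.pdom_translateOn (h : IsShiftBy A B s) : pdom (translateOn A (-s)) = A := by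
  ext n
  refine mem_pdom_translateOn.trans ⟨And.left, fun hn => ⟨hn, ?_⟩⟩
  obtain ⟨m, -, hnm⟩ := (h n).mp ⟨n, hn, rfl⟩
  have := m.pos
  omega

lemma IsShiftBy.pran_translateOn (h : IsShiftBy A B s) : pran (translateOn A (-s)) = B := by
  ext a
  refine mem_pran_translateOn.trans ⟨fun ⟨n, hn, ha⟩ => ?_, fun ha => ?_⟩
  · obtain ⟨m, hm, hnm⟩ := (h n).mp ⟨n, hn, rfl⟩
    rwa [show a = m by exact_mod_cast (by omega : (a : ℤ) = m)]
  · obtain ⟨n, hn, han⟩ := (h (a + s)).mpr ⟨a, ha, rfl⟩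
    exact ⟨n, hn, by omega⟩

end TranslateOn

section Green

variable {f g : PMapN} {s t : ℤ}

lemma pmul_translateOn_pran (hf : IsTranslationBy f s) (hg : IsTranslationBy g t)
    (h : pdom f = pdom g) : pmul (translateOn (pran f) (t - s)) f = g := by
  funext n
  simp only [pmul]
  cases hfn : f n with
  | none =>
    rw [eq_none_of_not_mem_pdom (h ▸ fun hn => hn hfn : n ∉ pdom g)]
    rfl
  | some m =>
    obtain ⟨a, hgn⟩ := mem_pdom_iff.mp (h ▸ mem_pdom_of_eq_some hfn : n ∈ pdom g)
    rw [hgn]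
    have := hf hfn
    have := hg hgn
    exact translateOn_eq_some.mpr ⟨mem_pran_of_eq_some hfn, by omega⟩

lemma pmul_translateOn_pdom (hf : IsTranslationBy f s) (hg : IsTranslationBy g t)
    (h : pran f = pran g) : pmul f (translateOn (pdom g) (t - s)) = g := by
  funext n
  simp only [pmul]
  by_cases hn : n ∈ pdom g
  · obtain ⟨a, hgn⟩ := mem_pdom_iff.mp hn
    obtain ⟨p, hfp⟩ := (h ▸ mem_pran_of_eq_some hgn : a ∈ pran f)
    have := hf hfp
    have := hg hgn
    rw [translateOn_eq_some (a := p) |>.mpr ⟨hn, by omega⟩, hgn]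
    exact hfp
  · have : translateOn (pdom g) (t - s) n = none :=
      eq_none_of_not_mem_pdom fun h' => hn (mem_pdom_translateOn.mp h').1
    rw [this, eq_none_of_not_mem_pdom hn]
    rfl

lemma greenL_of_pdom_eq (hf : InIN f) (hg : InIN g) (h : pdom f = pdom g) : GreenL f g := by
  obtain ⟨s, hs⟩ := hf.exists_isTranslationBy
  obtain ⟨t, ht⟩ := hg.exists_isTranslationBy
  exact ⟨⟨_, translateOn_mem_IN hf.2.2.1, pmul_translateOn_pran hs ht h⟩,
    ⟨_, translateOn_mem_IN hg.2.2.1, pmul_translateOn_pran ht hs h.symm⟩⟩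

lemma greenR_of_pran_eq (hf : InIN f) (hg : InIN g) (h : pran f = pran g) : GreenR f g := by
  obtain ⟨s, hs⟩ := hf.exists_isTranslationBy
  obtain ⟨t, ht⟩ := hg.exists_isTranslationBy
  exact ⟨⟨_, translateOn_mem_IN hg.2.1, pmul_translateOn_pdom hs ht h⟩,
    ⟨_, translateOn_mem_IN hf.2.1, pmul_translateOn_pdom ht hs h.symm⟩⟩

lemma greenD_iff_shiftOf_pdom_pran (hf : InIN f) (hg : InIN g) :
    GreenD f g ↔ ShiftOf (pdom f) (pran g) := by
  refine ⟨fun ⟨c, hc, hL, hR⟩ => ?_, fun ⟨s, hs⟩ => ?_⟩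
  · rw [hL.pdom_eq, ← hR.pran_eq]
    exact hc.shiftOf_pran_pdom.symm
  · have hc := translateOn_mem_IN (t := -s) hf.2.1
    exact ⟨_, hc, greenL_of_pdom_eq hf hc (IsShiftBy.pdom_translateOn hs).symm,
      greenR_of_pran_eq hc hg (IsShiftBy.pran_translateOn hs)⟩

end Green

/-- For `α, β ∈ 𝐈ℕ∞`, `α 𝓓 β` if and only if `dom α` is a shift of
`dom β` (equivalently, if and only if `ran α` is a shift of `ran β`). -/
theorem stmt8 (α β : PMapN) (hα : InIN α) (hβ : InIN β) :
    (GreenD α β ↔ ShiftOf (pdom α) (pdom β)) ∧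
    (GreenD α β ↔ ShiftOf (pran α) (pran β)) := by
  rw [greenD_iff_shiftOf_pdom_pran hα hβ]
  exact ⟨hβ.shiftOf_pran_pdom.congr_right, hα.shiftOf_pran_pdom.symm.congr_left⟩
end

section
/- The map 𝔉 : 𝐈ℕ∞ → ℤ assigning to each α the unique integer z_α with α(n) = n + z_α for all n ∈ dom α is a surjective monoid homomorphism to the additive group of integers, and 𝔉(α) = 𝔉(β) if and only if α 𝔠_mg β; consequently the quotient 𝐈ℕ∞/𝔠_mg of 𝐈ℕ∞ by its least group congruence is isomorphic to (ℤ, +). -/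
/-- The least group congruence `𝔠_mg` on the inverse semigroup `𝐈ℕ∞`:
`a 𝔠_mg b` iff `ea = eb` for some idempotent `e ∈ 𝐈ℕ∞`. -/
def Cmg (a b : PMapN) : Prop :=
  ∃ e, InIN e ∧ pmul e e = e ∧ pmul e a = pmul e b

/-!
An element `f` of `𝐈ℕ∞` is a translation `n ↦ n + z` restricted to its domain: if `f m = a` and `k`
is a point of the (infinite) domain far to the right, with `f k = c`, the isometry condition
`|c - a| = k - m` forces `c = a + (k - m)`, since the other sign would make `c` nonpositive. So
`c - k = a - m` for every `m`, and the displacement `z` is additive under composition. Idempotents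
fix a point, hence have displacement `0`, which gives `e f = e g → z_f = z_g`. Conversely, if
`z_f = z_g` then `f` and `g` agree wherever both are defined, and the partial identity on the
cofinite set `ran f ∩ ran g` is an idempotent `e` with `e f = e g`.
-/

lemma pdom_infinite {f : PMapN} (h : (pdom f)ᶜ.Finite) : (pdom f).Infinite := by
  simpa using h.infinite_compl

lemma pmul_eq_some {f g : PMapN} {n c : ℕ+} :
    pmul f g n = some c ↔ ∃ b, g n = some b ∧ f b = some c :=
  Option.bind_eq_some_iff

lemma pdom_pmul_compl_finite {f g : PMapN} (hg : IsPartialBij g) (hgd : (pdom g)ᶜ.Finite)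
    (hfd : (pdom f)ᶜ.Finite) : (pdom (pmul f g))ᶜ.Finite := by
  have hpre : (g ⁻¹' (some '' (pdom f)ᶜ)).Finite := by
    refine (hfd.image some).preimage ?_
    rintro m ⟨a, -, ha⟩ n ⟨b, -, hb⟩ hmn
    rw [← ha] at hmn
    exact hg ha.symm hmn.symm
  refine (hgd.union hpre).subset fun n hn => ?_
  rcases hgn : g n with - | b
  · exact Or.inl fun h => h hgn
  · refine Or.inr ⟨b, fun hb => hn ?_, hgn.symm⟩
    simpa [pdom, pmul, hgn] using hb

namespace IsIsometry

variable {f g : PMapN}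

lemma pmul (hf : IsIsometry f) (hg : IsIsometry g) : IsIsometry (pmul f g) := by
  intro m n c d hm hn
  obtain ⟨a, hma, hac⟩ := pmul_eq_some.mp hm
  obtain ⟨b, hnb, hbd⟩ := pmul_eq_some.mp hn
  rw [hf hac hbd, hg hma hnb]

lemma sub_eq_of_le (hf : IsIsometry f) {m k a c : ℕ+} (hm : f m = some a) (hk : f k = some c)
    (hle : (a : ℤ) + m ≤ k) : (c : ℤ) - k = a - m := by
  have hc := c.pos
  rcases abs_eq_abs.mp (hf hk hm) with h | h <;> omega

lemma sub_eq_sub (hf : IsIsometry f) (hdom : (pdom f).Infinite) {m n a b : ℕ+}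
    (hm : f m = some a) (hn : f n = some b) : (a : ℤ) - m = b - n := by
  obtain ⟨k, hk, hgt⟩ := hdom.exists_gt (a + m + b + n)
  obtain ⟨c, hc⟩ := Option.ne_none_iff_exists'.mp hk
  have hgt' : (a : ℤ) + m + b + n < k := by exact_mod_cast hgt
  rw [← hf.sub_eq_of_le hm hc (by omega), hf.sub_eq_of_le hn hc (by omega)]

end IsIsometry

open Classical in
noncomputable def displacement (f : PMapN) : ℤ :=
  if h : ∃ p : ℕ+ × ℕ+, f p.1 = some p.2 then (h.choose.2 : ℤ) - h.choose.1 else 0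

lemma IsIsometry.displacement_eq {f : PMapN} (hf : IsIsometry f) (hdom : (pdom f).Infinite)
    {n a : ℕ+} (hn : f n = some a) : displacement f = (a : ℤ) - n := by
  have h : ∃ p : ℕ+ × ℕ+, f p.1 = some p.2 := ⟨(n, a), hn⟩
  rw [displacement, dif_pos h]
  exact hf.sub_eq_sub hdom h.choose_spec hn

namespace InIN

variable {f g : PMapN}

lemma pdom_infinite (hf : InIN f) : (pdom f).Infinite :=
  _root_.pdom_infinite hf.2.1

lemma displacement_eq (hf : InIN f) {n a : ℕ+} (hn : f n = some a) :
    displacement f = (a : ℤ) - n :=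
  hf.2.2.2.displacement_eq hf.pdom_infinite hn

lemma exists_eq_some (hf : InIN f) : ∃ n a, f n = some a := by
  obtain ⟨n, hn⟩ := hf.pdom_infinite.nonempty
  exact ⟨n, Option.ne_none_iff_exists'.mp hn⟩

lemma displacement_pmul (hf : InIN f) (hg : InIN g) :
    displacement (pmul f g) = displacement f + displacement g := by
  have hdom := _root_.pdom_infinite (pdom_pmul_compl_finite hg.1 hg.2.1 hf.2.1)
  obtain ⟨n, hn⟩ := hdom.nonempty
  obtain ⟨c, hc⟩ := Option.ne_none_iff_exists'.mp hn
  obtain ⟨b, hnb, hbc⟩ := pmul_eq_some.mp hc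
  rw [(hf.2.2.2.pmul hg.2.2.2).displacement_eq hdom hc, hf.displacement_eq hbc,
    hg.displacement_eq hnb]
  ring

lemma displacement_eq_zero_of_idempotent (hf : InIN f) (hff : pmul f f = f) :
    displacement f = 0 := by
  obtain ⟨n, a, hn⟩ := hf.exists_eq_some
  have hfix : f a = some a := by
    simpa [pmul, hn] using congrFun hff n
  rw [hf.displacement_eq hfix, sub_self]

lemma eq_iff_eq_of_displacement_eq (hf : InIN f) (hg : InIN g)
    (hfg : displacement f = displacement g) {m n a b : ℕ+} (hm : f m = some a)
    (hn : g n = some b) : m = n ↔ a = b := by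
  have hsub : (a : ℤ) - m = b - n := by
    rw [← hf.displacement_eq hm, ← hg.displacement_eq hn, hfg]
  rw [← PNat.coe_inj, ← PNat.coe_inj (m := a)]
  omega

end InIN

noncomputable def ptranslate (z : ℤ) : PMapN := fun n =>
  if h : 0 < (n : ℤ) + z then some (((n : ℤ) + z).toNat.toPNat (by omega)) else none

lemma ptranslate_eq_some {z : ℤ} {n a : ℕ+} : ptranslate z n = some a ↔ (a : ℤ) = n + z := by
  by_cases h : 0 < (n : ℤ) + z
  · rw [ptranslate, dif_pos h, Option.some_inj, ← PNat.coe_inj]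
    change ((n : ℤ) + z).toNat = (a : ℕ) ↔ _
    omega
  · have := a.pos
    rw [ptranslate, dif_neg h]
    simp only [reduceCtorEq, false_iff]
    omega

lemma ptranslate_eq_none {z : ℤ} {n : ℕ+} : ptranslate z n = none ↔ (n : ℤ) + z ≤ 0 := by
  by_cases h : 0 < (n : ℤ) + z
  · simp only [ptranslate, dif_pos h, reduceCtorEq, false_iff]
    omega
  · simp only [ptranslate, dif_neg h, true_iff]
    omega

lemma finite_setOf_coe_le_s13 (t : ℤ) : {m : ℕ+ | (m : ℤ) ≤ t}.Finite :=
  ((Set.finite_Iic t.toNat).preimage PNat.coe_injective.injOn).subset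
    fun m (hm : (m : ℤ) ≤ t) => by simp only [Set.mem_preimage, Set.mem_Iic]; omega

lemma inIN_ptranslate (z : ℤ) : InIN (ptranslate z) := by
  refine ⟨fun m n a hm hn => ?_, ?_, ?_, fun m n a b hm hn => ?_⟩
  · rw [ptranslate_eq_some] at hm hn
    rw [← PNat.coe_inj, ← Nat.cast_inj (R := ℤ)]
    omega
  · refine (finite_setOf_coe_le_s13 (-z)).subset fun n hn => ?_
    have hle := ptranslate_eq_none.mp (not_not.mp hn)
    simp only [Set.mem_ofPred_eq]
    omega
  · refine (finite_setOf_coe_le_s13 z).subset fun m hm => ?_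
    by_contra h
    simp only [Set.mem_ofPred_eq, not_le] at h
    exact hm ⟨⟨((m : ℤ) - z).toNat, by omega⟩,
      ptranslate_eq_some.mpr (by simp only [PNat.mk_coe]; omega)⟩
  · rw [ptranslate_eq_some] at hm hn
    rw [hm, hn, add_sub_add_right_eq_sub]

lemma displacement_ptranslate (z : ℤ) : displacement (ptranslate z) = z := by
  obtain ⟨n, a, hn⟩ := (inIN_ptranslate z).exists_eq_some
  rw [(inIN_ptranslate z).displacement_eq hn, ptranslate_eq_some.mp hn, add_sub_cancel_left]

open Classical in
noncomputable def pidOn (S : Set ℕ+) : PMapN := fun m => if m ∈ S then some m else none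

lemma pidOn_eq_some {S : Set ℕ+} {m a : ℕ+} : pidOn S m = some a ↔ m ∈ S ∧ m = a := by
  unfold pidOn
  split_ifs with h <;> simp [h]

lemma pidOn_eq_none {S : Set ℕ+} {m : ℕ+} : pidOn S m = none ↔ m ∉ S := by
  unfold pidOn
  split_ifs with h <;> simp [h]

lemma pmul_pidOn_self (S : Set ℕ+) : pmul (pidOn S) (pidOn S) = pidOn S := by
  funext m
  by_cases h : m ∈ S <;> simp [pmul, pidOn, h]

lemma inIN_pidOn {S : Set ℕ+} (hS : Sᶜ.Finite) : InIN (pidOn S) := by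
  have hdom : pdom (pidOn S) = S := by
    ext m
    simp [pdom, pidOn_eq_none]
  have hran : pran (pidOn S) = S := by
    ext m
    simp [pran, pidOn_eq_some]
  refine ⟨fun m n a hm hn => ?_, by rwa [hdom], by rwa [hran], fun m n a b hm hn => ?_⟩
  · exact (pidOn_eq_some.mp hm).2.trans (pidOn_eq_some.mp hn).2.symm
  · rw [← (pidOn_eq_some.mp hm).2, ← (pidOn_eq_some.mp hn).2]

lemma cmg_of_displacement_eq {f g : PMapN} (hf : InIN f) (hg : InIN g)
    (hfg : displacement f = displacement g) : Cmg f g := by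
  have hcofinite : (pran f ∩ pran g)ᶜ.Finite := by
    rw [Set.compl_inter]
    exact hf.2.2.1.union hg.2.2.1
  refine ⟨_, inIN_pidOn hcofinite, pmul_pidOn_self _, funext fun n => ?_⟩
  rcases hfn : f n with - | a <;> rcases hgn : g n with - | b <;>
    simp only [pmul, hfn, hgn, Option.bind_none, Option.bind_some]
  · rw [eq_comm, pidOn_eq_none]
    rintro ⟨⟨m, hm⟩, -⟩
    obtain rfl := (hf.eq_iff_eq_of_displacement_eq hg hfg hm hgn).mpr rfl
    simp [hfn] at hm
  · rw [pidOn_eq_none]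
    rintro ⟨-, ⟨m, hm⟩⟩
    obtain rfl := (hf.eq_iff_eq_of_displacement_eq hg hfg hfn hm).mpr rfl
    simp [hgn] at hm
  · rw [(hf.eq_iff_eq_of_displacement_eq hg hfg hfn hgn).mp rfl]

lemma displacement_eq_of_cmg {f g : PMapN} (hf : InIN f) (hg : InIN g) (hfg : Cmg f g) :
    displacement f = displacement g := by
  obtain ⟨e, he, hee, hef⟩ := hfg
  have h := congrArg displacement hef
  rwa [he.displacement_pmul hf, he.displacement_pmul hg,
    he.displacement_eq_zero_of_idempotent hee, zero_add, zero_add] at h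

/-- The map `𝔉 : 𝐈ℕ∞ → ℤ` sending `α` to the unique integer `z_α` with
`α(n) = n + z_α` on `dom α` is a surjective homomorphism onto the additive group `(ℤ, +)`
and `𝔉(α) = 𝔉(β)` iff `α 𝔠_mg β`; consequently the quotient `𝐈ℕ∞/𝔠_mg` of `𝐈ℕ∞` by its
least group congruence is isomorphic to the additive group of integers. -/
theorem stmt13 :
    ∃ F : PMapN → ℤ,
      (∀ f, InIN f → ∀ n a, f n = some a → ((a : ℕ) : ℤ) = ((n : ℕ) : ℤ) + F f) ∧
      (∀ f g, InIN f → InIN g → F (pmul f g) = F f + F g) ∧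
      (∀ z : ℤ, ∃ f, InIN f ∧ F f = z) ∧
      (∀ f g, InIN f → InIN g → (F f = F g ↔ Cmg f g)) :=
  ⟨displacement,
    fun _ hf _ _ hn => by rw [hf.displacement_eq hn, add_sub_cancel],
    fun _ _ hf hg => hf.displacement_pmul hg,
    fun z => ⟨ptranslate z, inIN_ptranslate z, displacement_ptranslate z⟩,
    fun _ _ hf hg => ⟨cmg_of_displacement_eq hf hg, displacement_eq_of_cmg hf hg⟩⟩
end

section
/- A congruence 𝔠 on the semigroup 𝐈ℕ∞ is a group congruence if and only if its restriction 𝔠 ∩ (𝒞_ℕ × 𝒞_ℕ) to the submonoid 𝒞_ℕ is not the identity (equality) relation on 𝒞_ℕ, i.e. if and only if there exist two distinct elements of 𝒞_ℕ that are 𝔠-equivalent. -/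
/-- The partial translation `α₀ : n ↦ n + 1` with domain ℕ. -/
def alpha0 : PMapN := fun n => some (n + 1)

/-- The partial translation `β₀ : n ↦ n - 1` with domain `ℕ \ {1}`. -/
def beta0 : PMapN := fun n => if n = 1 then none else some (n - 1)

/-- Membership in the submonoid `𝒞_ℕ` of `𝐈ℕ∞` generated by `α₀` and `β₀`
(isomorphic to the bicyclic monoid). -/
inductive InC : PMapN → Prop
  | one : InC pid
  | base_a : InC alpha0
  | base_b : InC beta0
  | mul : ∀ f g, InC f → InC g → InC (pmul f g)

/-- A congruence on the semigroup `𝐈ℕ∞`: an equivalence relation on its elements that is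
compatible with multiplication on the left and on the right. -/
def IsCongr (r : PMapN → PMapN → Prop) : Prop :=
  (∀ f, InIN f → r f f) ∧
  (∀ f g, InIN f → InIN g → r f g → r g f) ∧
  (∀ f g h, InIN f → InIN g → InIN h → r f g → r g h → r f h) ∧
  (∀ f g c, InIN f → InIN g → InIN c → r f g →
      r (pmul c f) (pmul c g) ∧ r (pmul f c) (pmul g c))

/-- A group congruence on `𝐈ℕ∞`: a congruence whose quotient semigroup is a group,
i.e. there is a group `G` and a multiplicative map `φ` of `𝐈ℕ∞` onto `G` whose kernel is
exactly the congruence. -/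
def IsGroupCongr (r : PMapN → PMapN → Prop) : Prop :=
  IsCongr r ∧
  ∃ (G : Type) (_ : Group G) (φ : PMapN → G),
    (∀ f g, InIN f → InIN g → φ (pmul f g) = φ f * φ g) ∧
    (∀ x : G, ∃ f, InIN f ∧ φ f = x) ∧
    (∀ f g, InIN f → InIN g → (r f g ↔ φ f = φ g))

/-!
In `𝐈ℕ∞` we have `β₀ α₀ = 𝕀`, and every element of `𝒞_ℕ` has the form `α₀ ^ p β₀ ^ q`. In any
monoid with `b a = 1`, a relation `a ^ p b ^ q = a ^ s b ^ t` with `(p, q) ≠ (s, t)` forces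
`a b = 1`: cancel to `1 = a ^ u b ^ v` with `(u, v) ≠ (0, 0)`, which gives `a` a right inverse or
`b` a left inverse. So a congruence identifying two distinct elements of `𝒞_ℕ` makes the class of
`α₀` a unit. For `f ∈ 𝐈ℕ∞` and `k` large, the range of `α₀ ^ k` lies in the cofinite domain of `f`,
so `f⁻¹ f α₀ ^ k = α₀ ^ k`; cancelling the unit `α₀ ^ k`, every class has a left inverse and the
quotient is a group. Conversely, in a group `φ β₀ φ α₀ = 1` forces `φ (α₀ β₀) = 1 = φ 𝕀`, although
`α₀ β₀ ≠ 𝕀`.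
-/

section Monoid

variable {M : Type*} [Monoid M] {a b : M}

theorem pow_mul_pow_of_mul_eq_one (h : b * a = 1) (m n : ℕ) :
    b ^ m * a ^ n = a ^ (n - m) * b ^ (m - n) := by
  rcases le_total m n with hmn | hnm
  · conv_lhs => rw [← Nat.add_sub_cancel' hmn, pow_add, ← mul_assoc, pow_mul_pow_eq_one m h]
    simp [Nat.sub_eq_zero_of_le hmn]
  · conv_lhs => rw [← Nat.sub_add_cancel hnm, pow_add, mul_assoc, pow_mul_pow_eq_one n h]
    simp [Nat.sub_eq_zero_of_le hnm]

theorem pow_mul_pow_mul_pow_mul_pow_of_mul_eq_one (h : b * a = 1) (p q s t : ℕ) :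
    a ^ p * b ^ q * (a ^ s * b ^ t) = a ^ (p + (s - q)) * b ^ (q - s + t) := by
  rw [mul_assoc, ← mul_assoc (b ^ q), pow_mul_pow_of_mul_eq_one h]
  simp only [pow_add, mul_assoc]

theorem mul_eq_one_of_pow_mul_pow_eq (h : b * a = 1) {p q s t : ℕ}
    (hpq : a ^ p * b ^ q = a ^ s * b ^ t) (hne : (p, q) ≠ (s, t)) : a * b = 1 := by
  wlog hps : p ≤ s generalizing p q s t
  · exact this hpq.symm hne.symm (by omega)
  have key : a ^ (s - p + (q - t)) * b ^ (t - q) = 1 := calc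
    _ = b ^ p * a ^ s * (b ^ t * a ^ q) := by
      simp only [pow_mul_pow_of_mul_eq_one h, Nat.sub_eq_zero_of_le hps, pow_add]
      simp only [pow_zero, mul_one, mul_assoc]
    _ = b ^ p * (a ^ p * b ^ q) * a ^ q := by rw [hpq]; simp only [mul_assoc]
    _ = 1 := by
      rw [← mul_assoc, pow_mul_pow_eq_one p h, one_mul, pow_mul_pow_eq_one q h]
  rcases Nat.eq_zero_or_pos (s - p + (q - t)) with hu | hu
  · have hv : 0 < t - q := by
      by_contra hv
      exact hne (Prod.ext (by omega) (by omega))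
    rw [hu, pow_zero, one_mul, ← Nat.sub_add_cancel hv, pow_succ] at key
    rw [← left_inv_eq_right_inv key h, key]
  · rw [← Nat.sub_add_cancel hu, pow_succ', mul_assoc] at key
    rw [← left_inv_eq_right_inv h key] at key
    exact key

theorem isUnit_of_forall_exists_mul_eq_one (h : ∀ x : M, ∃ y, y * x = 1) (x : M) :
    IsUnit x := by
  obtain ⟨y, hyx⟩ := h x
  obtain ⟨z, hzy⟩ := h y
  rw [left_inv_eq_right_inv hzy hyx] at hzy
  exact isUnit_iff_exists.mpr ⟨y, hzy, hyx⟩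

end Monoid

theorem pmul_assoc (f g h : PMapN) : pmul (pmul f g) h = pmul f (pmul g h) := by
  funext n
  simp only [pmul]
  cases h n <;> rfl

theorem pid_pmul (f : PMapN) : pmul pid f = f := by
  funext n
  simp only [pmul, pid]
  cases f n <;> rfl

theorem pmul_pid (f : PMapN) : pmul f pid = f := rfl

theorem pmul_beta0_alpha0 : pmul beta0 alpha0 = pid := by
  funext n
  simp [pmul, alpha0, beta0, pid, (PNat.lt_add_left 1 n).ne']

theorem pmul_alpha0_beta0_ne_pid : pmul alpha0 beta0 ≠ pid := fun h => by
  simpa [pmul, alpha0, beta0, pid] using congrFun h 1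

theorem isPartialBij_pmul {f g : PMapN} (hf : IsPartialBij f) (hg : IsPartialBij g) :
    IsPartialBij (pmul f g) := by
  intro m n a hm hn
  simp only [pmul, Option.bind_eq_some_iff] at hm hn
  obtain ⟨x, hmx, hxa⟩ := hm
  obtain ⟨y, hny, hya⟩ := hn
  obtain rfl := hf hxa hya
  exact hg hmx hny

theorem isIsometry_pmul {f g : PMapN} (hf : IsIsometry f) (hg : IsIsometry g) :
    IsIsometry (pmul f g) := by
  intro m n a b hm hn
  simp only [pmul, Option.bind_eq_some_iff] at hm hn
  obtain ⟨x, hmx, hxa⟩ := hm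
  obtain ⟨y, hny, hyb⟩ := hn
  exact (hf hxa hyb).trans (hg hmx hny)

theorem compl_pdom_pmul_subset (f g : PMapN) :
    (pdom (pmul f g))ᶜ ⊆ (pdom g)ᶜ ∪ ⋃ a ∈ (pdom f)ᶜ, {n | g n = some a} := by
  intro n hn
  simp only [pdom, pmul, Set.mem_compl_iff, Set.mem_ofPred_eq, not_not] at hn
  cases hgn : g n with
  | none => simp [pdom, hgn]
  | some a => simp_all [pdom]

theorem compl_pran_pmul_subset (f g : PMapN) :
    (pran (pmul f g))ᶜ ⊆ (pran f)ᶜ ∪ ⋃ a ∈ (pran g)ᶜ, {m | f a = some m} := by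
  intro m hm
  simp only [pran, pmul, Set.mem_compl_iff, Set.mem_ofPred_eq, not_exists] at hm
  by_cases hf : ∃ a, f a = some m
  · obtain ⟨a, ha⟩ := hf
    refine Or.inr (Set.mem_biUnion (fun ⟨n, hn⟩ => hm n ?_) ha)
    rw [hn, Option.bind_some, ha]
  · exact Or.inl hf

theorem inIN_pmul {f g : PMapN} (hf : InIN f) (hg : InIN g) : InIN (pmul f g) := by
  obtain ⟨fb, fd, fr, fi⟩ := hf
  obtain ⟨gb, gd, gr, gi⟩ := hg
  refine ⟨isPartialBij_pmul fb gb, ?_, ?_, isIsometry_pmul fi gi⟩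
  · refine ((gd.union (fd.biUnion fun a _ => ?_)).subset (compl_pdom_pmul_subset f g))
    exact Set.Subsingleton.finite fun x hx y hy => gb hx hy
  · refine ((fr.union (gr.biUnion fun a _ => ?_)).subset (compl_pran_pmul_subset f g))
    exact Set.Subsingleton.finite fun x hx y hy => Option.some.inj (hx.symm.trans hy)

theorem inIN_pid : InIN pid := by
  refine ⟨fun m n a hm hn => ?_, ?_, ?_, fun m n a b hm hn => ?_⟩
  · simp_all [pid]
  · simp [pdom, pid]
  · simp [pran, pid]
  · simp_all [pid]

theorem inIN_alpha0 : InIN alpha0 := by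
  refine ⟨fun m n a hm hn => ?_, ?_, ?_, fun m n a b hm hn => ?_⟩
  · simp only [alpha0, Option.some.injEq] at hm hn
    exact add_right_cancel (hm.trans hn.symm)
  · simp [pdom, alpha0]
  · refine (Set.finite_Iic 1).subset fun m hm => ?_
    by_contra h1
    exact hm ⟨m - 1, by simp [alpha0, PNat.sub_add_of_lt (not_le.mp h1)]⟩
  · simp only [alpha0, Option.some.injEq] at hm hn
    subst hm hn
    simp

theorem beta0_eq_some_iff {m n : ℕ+} : beta0 m = some n ↔ m = n + 1 := by
  unfold beta0
  split_ifs with h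
  · simp [h, (PNat.lt_add_left 1 n).ne]
  · have h1 : 1 < m := lt_of_le_of_ne one_le (Ne.symm h)
    simp only [Option.some.injEq, ← PNat.coe_inj, PNat.sub_coe, if_pos h1, PNat.add_coe,
      PNat.one_coe]
    have : 1 < (m : ℕ) := h1
    omega

theorem inIN_beta0 : InIN beta0 := by
  refine ⟨fun m n a hm hn => ?_, ?_, ?_, fun m n a b hm hn => ?_⟩
  · rw [beta0_eq_some_iff] at hm hn
    exact hm.trans hn.symm
  · refine (Set.finite_Iic 1).subset fun m hm => ?_
    by_contra h1
    rw [Set.mem_Iic, not_le] at h1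
    exact hm (by simp [pdom, beta0, h1.ne'])
  · simp [pran, beta0_eq_some_iff]
  · rw [beta0_eq_some_iff] at hm hn
    subst hm hn
    simp

open Classical in
noncomputable def finv (f : PMapN) : PMapN :=
  fun m => if h : ∃ n, f n = some m then some h.choose else none

theorem finv_eq_some_iff {f : PMapN} (hf : IsPartialBij f) {m n : ℕ+} :
    finv f m = some n ↔ f n = some m := by
  by_cases h : ∃ k, f k = some m
  · simp only [finv, dif_pos h, Option.some.injEq]
    exact ⟨fun h' => h' ▸ h.choose_spec, fun h' => hf h.choose_spec h'⟩
  · simp only [finv, dif_neg h, reduceCtorEq, false_iff]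
    exact fun h' => h ⟨n, h'⟩

theorem pdom_finv {f : PMapN} (hf : IsPartialBij f) : pdom (finv f) = pran f := by
  ext m
  simp [pdom, pran, Option.ne_none_iff_exists', finv_eq_some_iff hf]

theorem pran_finv {f : PMapN} (hf : IsPartialBij f) : pran (finv f) = pdom f := by
  ext n
  simp [pdom, pran, Option.ne_none_iff_exists', finv_eq_some_iff hf]

theorem inIN_finv {f : PMapN} (hf : InIN f) : InIN (finv f) := by
  obtain ⟨fb, fd, fr, fi⟩ := hf
  refine ⟨fun m n a hm hn => ?_, pdom_finv fb ▸ fr, pran_finv fb ▸ fd, fun m n a b hm hn => ?_⟩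
  · rw [finv_eq_some_iff fb] at hm hn
    exact Option.some.inj (hm.symm.trans hn)
  · rw [finv_eq_some_iff fb] at hm hn
    exact (fi hm hn).symm

theorem finv_pmul_pmul {f g : PMapN} (hf : IsPartialBij f) (hg : pran g ⊆ pdom f) :
    pmul (finv f) (pmul f g) = g := by
  funext n
  cases hgn : g n with
  | none => simp [pmul, hgn]
  | some m =>
    obtain ⟨a, ha⟩ := Option.ne_none_iff_exists'.mp (hg ⟨n, hgn⟩)
    simp [pmul, hgn, ha, (finv_eq_some_iff hf).mpr ha]

abbrev INInf : Type := {f : PMapN // InIN f}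

namespace INInf

instance : Monoid INInf where
  mul f g := ⟨pmul f.1 g.1, inIN_pmul f.2 g.2⟩
  one := ⟨pid, inIN_pid⟩
  mul_assoc f g h := Subtype.ext (pmul_assoc f.1 g.1 h.1)
  one_mul f := Subtype.ext (pid_pmul f.1)
  mul_one f := Subtype.ext (pmul_pid f.1)

@[simp] theorem val_mul (f g : INInf) : (f * g).1 = pmul f.1 g.1 := rfl

@[simp] theorem val_one : (1 : INInf).1 = pid := rfl

def alpha : INInf := ⟨alpha0, inIN_alpha0⟩

def beta : INInf := ⟨beta0, inIN_beta0⟩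

theorem beta_mul_alpha : beta * alpha = 1 := Subtype.ext pmul_beta0_alpha0

theorem pran_alpha_pow_subset (k : ℕ) : pran (alpha ^ k).1 ⊆ {n | k < (n : ℕ)} := by
  induction k with
  | zero => exact fun n _ => n.pos
  | succ k ih =>
    rintro m ⟨n, hn⟩
    rw [pow_succ', val_mul] at hn
    simp only [pmul, Option.bind_eq_some_iff, alpha, alpha0, Option.some.injEq] at hn
    obtain ⟨x, hx, rfl⟩ := hn
    have : k < (x : ℕ) := ih ⟨n, hx⟩
    simp only [Set.mem_ofPred_eq, PNat.add_coe, PNat.one_coe]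
    omega

theorem exists_mul_mul_alpha_pow_eq (f : INInf) :
    ∃ (g : INInf) (k : ℕ), g * f * alpha ^ k = alpha ^ k := by
  obtain ⟨k, hk⟩ := f.2.2.1.bddAbove
  refine ⟨⟨finv f.1, inIN_finv f.2⟩, k, Subtype.ext ?_⟩
  rw [val_mul, val_mul, pmul_assoc]
  refine finv_pmul_pmul f.2.1 fun n hn => ?_
  by_contra hnf
  exact (hk hnf).not_gt (pran_alpha_pow_subset k hn)

theorem isUnit_of_isUnit_map_alpha {N : Type*} [Monoid N] (π : INInf →* N)
    (hπ : Function.Surjective π) (hα : IsUnit (π alpha)) (x : N) : IsUnit x := by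
  refine isUnit_of_forall_exists_mul_eq_one (fun y => ?_) x
  obtain ⟨f, rfl⟩ := hπ y
  obtain ⟨g, k, hgk⟩ := exists_mul_mul_alpha_pow_eq f
  refine ⟨π g, (hα.pow k).mul_eq_right.mp ?_⟩
  rw [← map_pow, ← map_mul, ← map_mul, hgk]

end INInf

theorem InC.exists_eq_pow_mul_pow {f : PMapN} (hf : InC f) :
    ∃ p q : ℕ, f = (INInf.alpha ^ p * INInf.beta ^ q).1 := by
  induction hf with
  | one => exact ⟨0, 0, by simp⟩
  | base_a => exact ⟨1, 0, by simp [INInf.alpha]⟩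
  | base_b => exact ⟨0, 1, by simp [INInf.beta]⟩
  | mul f g _ _ ihf ihg =>
    obtain ⟨p, q, rfl⟩ := ihf
    obtain ⟨s, t, rfl⟩ := ihg
    exact ⟨_, _, congrArg Subtype.val
      (pow_mul_pow_mul_pow_mul_pow_of_mul_eq_one INInf.beta_mul_alpha p q s t)⟩

section Congruence

variable {r : PMapN → PMapN → Prop}

def IsCongr.toCon (hr : IsCongr r) : Con INInf where
  r f g := r f.1 g.1
  iseqv := ⟨fun f => hr.1 _ f.2, fun {f g} h => hr.2.1 _ _ f.2 g.2 h,
    fun {f g h} hfg hgh => hr.2.2.1 _ _ _ f.2 g.2 h.2 hfg hgh⟩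
  mul' {f f' g g'} hf hg := hr.2.2.1 _ _ _ (f * g).2 (f' * g).2 (f' * g').2
    (hr.2.2.2 _ _ _ f.2 f'.2 g.2 hf).2 (hr.2.2.2 _ _ _ g.2 g'.2 f'.2 hg).1

theorem IsCongr.isUnit_mk'_alpha (hr : IsCongr r) {f g : PMapN} (hf : InC f) (hg : InC g)
    (hne : f ≠ g) (hfg : r f g) : IsUnit (hr.toCon.mk' INInf.alpha) := by
  obtain ⟨p, q, rfl⟩ := hf.exists_eq_pow_mul_pow
  obtain ⟨s, t, rfl⟩ := hg.exists_eq_pow_mul_pow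
  have hba : hr.toCon.mk' INInf.beta * hr.toCon.mk' INInf.alpha = 1 := by
    rw [← map_mul, INInf.beta_mul_alpha, map_one]
  have hpq : hr.toCon.mk' INInf.alpha ^ p * hr.toCon.mk' INInf.beta ^ q =
      hr.toCon.mk' INInf.alpha ^ s * hr.toCon.mk' INInf.beta ^ t := by
    simp only [← map_pow, ← map_mul]
    exact hr.toCon.eq.mpr hfg
  have hpq_ne : (p, q) ≠ (s, t) := by
    rintro ⟨⟩
    exact hne rfl
  exact isUnit_iff_exists.mpr ⟨_, mul_eq_one_of_pow_mul_pow_eq hba hpq hpq_ne, hba⟩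

theorem IsCongr.isGroupCongr (hr : IsCongr r) (h : ∀ x : hr.toCon.Quotient, IsUnit x) :
    IsGroupCongr r := by
  let _ := groupOfIsUnit h
  classical
  refine ⟨hr, hr.toCon.Quotient, inferInstance,
    fun f => if hf : InIN f then hr.toCon.mk' ⟨f, hf⟩ else 1, ?_, ?_, ?_⟩
  · intro f g hf hg
    simp only [dif_pos hf, dif_pos hg, dif_pos (inIN_pmul hf hg)]
    exact map_mul hr.toCon.mk' ⟨f, hf⟩ ⟨g, hg⟩
  · intro x
    obtain ⟨f, rfl⟩ := hr.toCon.mk'_surjective x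
    exact ⟨f.1, f.2, dif_pos f.2⟩
  · intro f g hf hg
    simp only [dif_pos hf, dif_pos hg]
    exact (hr.toCon.eq (a := ⟨f, hf⟩) (b := ⟨g, hg⟩)).symm

theorem IsGroupCongr.rel_pmul_alpha0_beta0 (h : IsGroupCongr r) : r (pmul alpha0 beta0) pid := by
  obtain ⟨-, G, _, φ, hφ, -, hker⟩ := h
  have hone : φ pid = 1 :=
    (mul_eq_left (a := φ pid)).mp (by rw [← hφ _ _ inIN_pid inIN_pid, pmul_pid])
  have hba : φ beta0 * φ alpha0 = 1 := by
    rw [← hφ _ _ inIN_beta0 inIN_alpha0, pmul_beta0_alpha0, hone]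
  rw [hker _ _ (inIN_pmul inIN_alpha0 inIN_beta0) inIN_pid, hφ _ _ inIN_alpha0 inIN_beta0, hone]
  exact mul_eq_one_comm.mp hba

end Congruence

/-- A congruence `𝔠` on `𝐈ℕ∞` is a group congruence if and only if its
restriction to the submonoid `𝒞_ℕ` is not the identity relation, i.e. iff there are two
distinct elements of `𝒞_ℕ` that are `𝔠`-equivalent. -/
theorem stmt17 (r : PMapN → PMapN → Prop) (hr : IsCongr r) :
    IsGroupCongr r ↔ ∃ a b, InC a ∧ InC b ∧ a ≠ b ∧ r a b := by
  refine ⟨fun h => ⟨_, _, .mul _ _ .base_a .base_b, .one, pmul_alpha0_beta0_ne_pid,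
    h.rel_pmul_alpha0_beta0⟩, ?_⟩
  rintro ⟨f, g, hf, hg, hne, hfg⟩
  exact hr.isGroupCongr <| INInf.isUnit_of_isUnit_map_alpha _ hr.toCon.mk'_surjective
    (hr.isUnit_mk'_alpha hf hg hne hfg)
end

section
/- For an element ξ of the monoid 𝐈ℕ∞ the following are equivalent: (1) ξ ∈ 𝒞_ℕ; (2) dom ξ is a tail of ℕ, i.e. dom ξ = { n ∈ ℕ : n ≥ min(dom ξ) }; (3) ran ξ is a tail of ℕ, i.e. ran ξ = { n ∈ ℕ : n ≥ min(ran ξ) }. -/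
/-- `A` is a tail of ℕ: `A = {n : n ≥ k}` for some positive integer `k`
(equivalently, `A = {n : n ≥ min A}`). -/
def IsTail (A : Set ℕ+) : Prop := ∃ k : ℕ+, A = {n : ℕ+ | k ≤ n}

/-! An element of `𝐈ℕ∞` is a translation `n ↦ n + c` on its domain: its domain is infinite, and
comparing the distances from two points to one far-away point of the domain forces them to be
moved by the same amount. A translation is determined by its domain, and also by its range.
The elements of `𝒞_ℕ` are exactly the translations `n ↦ n - b + a` with domain `{n | b < n}`
(the bicyclic element `α₀ᵃ β₀ᵇ`), so for a translation each of "`𝒞_ℕ`", "tail domain" and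
"tail range" amounts to being such a map. -/

def shift (a b : ℕ) : PMapN := fun n =>
  if h : b < (n : ℕ) then some ((n + a - b).toPNat (by omega)) else none

lemma shift_apply_of_lt {a b : ℕ} {n : ℕ+} (h : b < (n : ℕ)) :
    shift a b n = some ((n + a - b).toPNat (by omega)) :=
  dif_pos h

lemma shift_apply_of_le {a b : ℕ} {n : ℕ+} (h : (n : ℕ) ≤ b) : shift a b n = none :=
  dif_neg (by omega)

lemma shift_mul (a b a' b' : ℕ) :
    pmul (shift a b) (shift a' b') = shift (a + a' - min b a') (b + b' - min b a') := by
  funext n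
  by_cases h₁ : b' < (n : ℕ)
  · by_cases h₂ : b < (n : ℕ) + a' - b'
    · rw [pmul, shift_apply_of_lt h₁, Option.bind_some, shift_apply_of_lt h₂,
        shift_apply_of_lt (by omega)]
      exact congrArg some (PNat.eq (by simp only [Nat.toPNat, PNat.mk_coe]; omega))
    · rw [pmul, shift_apply_of_lt h₁, Option.bind_some,
        shift_apply_of_le (by simp only [Nat.toPNat, PNat.mk_coe]; omega),
        shift_apply_of_le (by omega)]
  · rw [pmul, shift_apply_of_le (by omega), Option.bind_none, shift_apply_of_le (by omega)]

lemma pid_eq_shift : pid = shift 0 0 := by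
  funext n
  rw [shift_apply_of_lt n.pos]
  rfl

lemma alpha0_eq_shift : alpha0 = shift 1 0 := by
  funext n
  rw [shift_apply_of_lt n.pos]
  rfl

lemma beta0_eq_shift : beta0 = shift 0 1 := by
  funext n
  rcases eq_or_ne n 1 with rfl | hn
  · rfl
  · have hn : 1 < n := lt_of_le_of_ne one_le hn.symm
    rw [beta0, if_neg hn.ne', shift_apply_of_lt (show 1 < (n : ℕ) from hn)]
    exact congrArg some (PNat.eq (by rw [PNat.sub_coe, if_pos hn]; rfl))

lemma inC_shift (a b : ℕ) : InC (shift a b) := by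
  have inC_alpha0_pow (a : ℕ) : InC (shift a 0) := by
    induction a with
    | zero => exact pid_eq_shift ▸ InC.one
    | succ a ih =>
      have h := InC.mul _ _ InC.base_a ih
      rwa [alpha0_eq_shift, shift_mul, Nat.add_comm] at h
  have inC_beta0_pow (b : ℕ) : InC (shift 0 b) := by
    induction b with
    | zero => exact pid_eq_shift ▸ InC.one
    | succ b ih =>
      have h := InC.mul _ _ ih InC.base_b
      rw [beta0_eq_shift, shift_mul] at h
      simpa using h
  have h := InC.mul _ _ (inC_alpha0_pow a) (inC_beta0_pow b)
  rw [shift_mul] at h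
  simpa using h

lemma inC_iff_exists_eq_shift {ξ : PMapN} : InC ξ ↔ ∃ a b, ξ = shift a b := by
  refine ⟨fun h => ?_, fun ⟨a, b, h⟩ => h ▸ inC_shift a b⟩
  induction h with
  | one => exact ⟨0, 0, pid_eq_shift⟩
  | base_a => exact ⟨1, 0, alpha0_eq_shift⟩
  | base_b => exact ⟨0, 1, beta0_eq_shift⟩
  | mul f g _ _ ihf ihg =>
    obtain ⟨a, b, rfl⟩ := ihf
    obtain ⟨a', b', rfl⟩ := ihg
    exact ⟨_, _, shift_mul a b a' b'⟩

lemma isTail_iff_exists_lt {A : Set ℕ+} : IsTail A ↔ ∃ b : ℕ, A = {n : ℕ+ | b < (n : ℕ)} := by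
  constructor
  · rintro ⟨k, rfl⟩
    refine ⟨k - 1, Set.ext fun n => ?_⟩
    simp only [Set.mem_ofPred_eq, ← PNat.coe_le_coe]
    have := k.pos
    omega
  · rintro ⟨b, rfl⟩
    refine ⟨b.succPNat, Set.ext fun n => ?_⟩
    simp only [Set.mem_ofPred_eq, ← PNat.coe_le_coe, Nat.succPNat_coe]
    omega

def Translates (ξ : PMapN) (c : ℤ) : Prop :=
  ∀ ⦃n m : ℕ+⦄, ξ n = some m → (m : ℤ) = n + c

lemma translates_shift (a b : ℕ) : Translates (shift a b) (a - b) := by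
  intro n m h
  by_cases hn : b < (n : ℕ)
  · rw [shift_apply_of_lt hn, Option.some_inj] at h
    subst h
    simp only [Nat.toPNat, PNat.mk_coe]
    omega
  · rw [shift_apply_of_le (by omega)] at h
    simp at h

lemma pdom_shift (a b : ℕ) : pdom (shift a b) = {n : ℕ+ | b < (n : ℕ)} := by
  ext n
  by_cases hn : b < (n : ℕ)
  · simp [pdom, shift_apply_of_lt hn, hn]
  · simp [pdom, shift_apply_of_le (not_lt.1 hn), hn]

lemma pran_shift (a b : ℕ) : pran (shift a b) = {m : ℕ+ | a < (m : ℕ)} := by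
  ext m
  constructor
  · rintro ⟨n, hn⟩
    have hn_dom : b < (n : ℕ) := (Set.ext_iff.1 (pdom_shift a b) n).1 (by simp [pdom, hn])
    have := translates_shift a b hn
    show a < (m : ℕ)
    omega
  · intro hm
    have hm : a < (m : ℕ) := hm
    refine ⟨(m + b - a).toPNat (by omega), ?_⟩
    rw [shift_apply_of_lt (by simp only [Nat.toPNat, PNat.mk_coe]; omega)]
    exact congrArg some (PNat.eq (by simp only [Nat.toPNat, PNat.mk_coe]; omega))

lemma exists_translates {ξ : PMapN} (hdom : (pdom ξ).Infinite) (hiso : IsIsometry ξ) :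
    ∃ c, Translates ξ c := by
  obtain ⟨n₀, hn₀⟩ := hdom.nonempty
  obtain ⟨m₀, hm₀⟩ := Option.ne_none_iff_exists'.1 hn₀
  refine ⟨m₀ - n₀, fun n m hm => ?_⟩
  -- `N` is so far out that `ξ N` can lie below neither `m₀` nor `m`
  obtain ⟨N, hN_dom, hN⟩ := hdom.exists_gt (m₀ + n₀ + m + n)
  obtain ⟨M, hM⟩ := Option.ne_none_iff_exists'.1 hN_dom
  have hN : (m₀ : ℕ) + n₀ + m + n < N := hN
  have h₀ := hiso hM hm₀
  have h := hiso hM hm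
  have := M.pos
  rcases abs_eq_abs.1 h₀ with h₀ | h₀ <;> rcases abs_eq_abs.1 h with h | h <;> omega

namespace Translates

variable {ξ η : PMapN} {c : ℤ}

lemma mem_pdom_iff (hξ : Translates ξ c) {n : ℕ+} :
    n ∈ pdom ξ ↔ ∃ m ∈ pran ξ, (m : ℤ) = n + c := by
  constructor
  · intro hn
    obtain ⟨m, hm⟩ := Option.ne_none_iff_exists'.1 hn
    exact ⟨m, ⟨n, hm⟩, hξ hm⟩
  · rintro ⟨m, ⟨n', hn'⟩, hm⟩
    have : n' = n := PNat.eq (by have := hξ hn'; omega)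
    subst this
    simp [pdom, hn']

lemma ext (hξ : Translates ξ c) (hη : Translates η c) (h : pdom ξ = pdom η) : ξ = η := by
  funext n
  have hn : ξ n ≠ none ↔ η n ≠ none := Set.ext_iff.1 h n
  cases hξn : ξ n with
  | none => simpa [hξn, eq_comm] using hn
  | some m =>
    obtain ⟨m', hm'⟩ := Option.ne_none_iff_exists'.1 (hn.1 (by simp [hξn]))
    have h₁ := hξ hξn
    have h₂ := hη hm'
    exact hm' ▸ congrArg some (PNat.eq (by omega))

lemma ext_of_pran_eq (hξ : Translates ξ c) (hη : Translates η c) (h : pran ξ = pran η) :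
    ξ = η :=
  hξ.ext hη (Set.ext fun n => by rw [hξ.mem_pdom_iff, hη.mem_pdom_iff, h])

lemma isTail_pdom_iff (hξ : Translates ξ c) : IsTail (pdom ξ) ↔ ∃ a b, ξ = shift a b := by
  refine ⟨fun h => ?_, fun ⟨a, b, h⟩ => h ▸ isTail_iff_exists_lt.2 ⟨b, pdom_shift a b⟩⟩
  obtain ⟨b, hb⟩ := isTail_iff_exists_lt.1 h
  have hb₁ : b.succPNat ∈ pdom ξ := by simp [hb]
  -- `1 ≤ ξ (b + 1) = b + 1 + c`, so the shift `a := b + c` is a natural number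
  obtain ⟨m, -, hm⟩ := hξ.mem_pdom_iff.1 hb₁
  obtain ⟨a, rfl⟩ : ∃ a : ℕ, c = a - b := ⟨(b + c).toNat, by
    rw [Nat.succPNat_coe] at hm
    have := m.pos
    omega⟩
  exact ⟨a, b, hξ.ext (translates_shift a b) (hb.trans (pdom_shift a b).symm)⟩

lemma isTail_pran_iff (hξ : Translates ξ c) : IsTail (pran ξ) ↔ ∃ a b, ξ = shift a b := by
  refine ⟨fun h => ?_, fun ⟨a, b, h⟩ => h ▸ isTail_iff_exists_lt.2 ⟨a, pran_shift a b⟩⟩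
  obtain ⟨a, ha⟩ := isTail_iff_exists_lt.1 h
  obtain ⟨n, hn⟩ : a.succPNat ∈ pran ξ := by simp [ha]
  have hc := hξ hn
  obtain ⟨b, rfl⟩ : ∃ b : ℕ, c = a - b := ⟨(a - c).toNat, by
    rw [Nat.succPNat_coe] at hc
    have := n.pos
    omega⟩
  exact ⟨a, b, hξ.ext_of_pran_eq (translates_shift a b) (ha.trans (pran_shift a b).symm)⟩

end Translates

/-- For `ξ ∈ 𝐈ℕ∞` the following are equivalent:
(1) `ξ ∈ 𝒞_ℕ`; (2) `dom ξ` is a tail of ℕ; (3) `ran ξ` is a tail of ℕ. -/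
theorem stmt18 (ξ : PMapN) (hξ : InIN ξ) :
    (InC ξ ↔ IsTail (pdom ξ)) ∧ (InC ξ ↔ IsTail (pran ξ)) := by
  obtain ⟨-, hdom, -, hiso⟩ := hξ
  obtain ⟨c, hc⟩ := exists_translates (compl_compl (pdom ξ) ▸ hdom.infinite_compl) hiso
  rw [inC_iff_exists_eq_shift, hc.isTail_pdom_iff, hc.isTail_pran_iff]
  exact ⟨Iff.rfl, Iff.rfl⟩
end
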